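/- Let E and F be semilattices with zero and let h : E → F be a homomorphism of semilattices with zero. Then the following are equivalent: (i) for every tight character ψ on F, the composition ψ ∘ h is nonzero (hence a character on E); (ii) for every f ∈ F there exists a finite set C ⊆ E such that {f ∧ h(e) : e ∈ C} is a cover for f. -/

import Mathlib

/-- A finite subset `C` is a cover for `f`: every `c ∈ C` satisfies `c ≤ f` and every
nonzero `g ≤ f` meets some `c ∈ C`. -/
def IsCover {E : Type*} [SemilatticeInf E] [OrderBot E] (C : Finset E) (f : E) : Prop :=
  (∀ c ∈ C, c ≤ f) ∧ ∀ g : E, g ≠ ⊥ → g ≤ f → ∃ c ∈ C, g ⊓ c ≠ ⊥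

/-- The (finite) family `{v i : i ∈ C}` is a cover for `f`. -/
def IsCoverFam {ι : Type*} {E : Type*} [SemilatticeInf E] [OrderBot E]
    (C : Finset ι) (v : ι → E) (f : E) : Prop :=
  (∀ i ∈ C, v i ≤ f) ∧ ∀ g : E, g ≠ ⊥ → g ≤ f → ∃ i ∈ C, g ⊓ v i ≠ ⊥

/-- A character on a semilattice with zero: a multiplicative `{0,1}`-valued map sending
`0` to `0` and not identically zero. -/
def IsChar {E : Type*} [SemilatticeInf E] [OrderBot E] (φ : E → Bool) : Prop :=
  φ ⊥ = false ∧ (∀ e f : E, φ (e ⊓ f) = (φ e && φ f)) ∧ ∃ e : E, φ e = true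

/-- A tight character: a character such that, for every `f` and every cover `C` for `f`,
`φ f = max_{c ∈ C} φ c`. -/
def IsTightChar {E : Type*} [SemilatticeInf E] [OrderBot E] (φ : E → Bool) : Prop :=
  IsChar φ ∧ ∀ f : E, ∀ C : Finset E, IsCover C f → (φ f = true ↔ ∃ c ∈ C, φ c = true)

/-- A filter on a semilattice with zero. -/
def IsFilterOn {E : Type*} [SemilatticeInf E] [OrderBot E] (ξ : Set E) : Prop :=
  ξ.Nonempty ∧ ⊥ ∉ ξ ∧ (∀ e ∈ ξ, ∀ f ∈ ξ, e ⊓ f ∈ ξ) ∧ ∀ e ∈ ξ, ∀ f : E, e ≤ f → f ∈ ξ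

/-- A tight filter: whenever `C` is a cover for some `f ∈ ξ`, some element of `C` lies in `ξ`. -/
def IsTightFilter {E : Type*} [SemilatticeInf E] [OrderBot E] (ξ : Set E) : Prop :=
  IsFilterOn ξ ∧ ∀ f ∈ ξ, ∀ C : Finset E, IsCover C f → ∃ c ∈ C, c ∈ ξ

/-- The tight order: `e` is tightly below `f` iff there is no nonzero `g ≤ e` with `g ⊓ f = ⊥`. -/
def TightBelow {E : Type*} [SemilatticeInf E] [OrderBot E] (e f : E) : Prop :=
  ¬ ∃ g : E, g ≠ ⊥ ∧ g ≤ e ∧ g ⊓ f = ⊥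

/-- Tight equivalence. -/
def TightEquiv {E : Type*} [SemilatticeInf E] [OrderBot E] (e f : E) : Prop :=
  TightBelow e f ∧ TightBelow f e

/-- A homomorphism is tightly injective if it reflects tight equivalence. -/
def TightlyInjective {E F : Type*} [SemilatticeInf E] [OrderBot E] [SemilatticeInf F] [OrderBot F]
    (h : E → F) : Prop :=
  ∀ e₁ e₂ : E, TightEquiv (h e₁) (h e₂) → TightEquiv e₁ e₂

/-- A homomorphism is tightly surjective if its range is a large subset of the codomain:
for every `f` there is a finite `C ⊆ E` with `h e ≼ f` for all `e ∈ C` and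
`{f ⊓ h e : e ∈ C}` a cover for `f`. -/
def TightlySurjective {E F : Type*} [SemilatticeInf E] [OrderBot E] [SemilatticeInf F] [OrderBot F]
    (h : E → F) : Prop :=
  ∀ f : F, ∃ C : Finset E, (∀ e ∈ C, TightBelow (h e) f) ∧ IsCoverFam C (fun e => f ⊓ h e) f

/-- A homomorphism of semilattices with zero is tight if it satisfies conditions
(4.1.ii) and (4.3.ii) of the paper. -/
def IsTightHom {E F : Type*} [SemilatticeInf E] [OrderBot E] [SemilatticeInf F] [OrderBot F]
    (h : E → F) : Prop :=
  (∀ f : F, ∃ C : Finset E, IsCoverFam C (fun e => f ⊓ h e) f) ∧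
  (∀ e : E, ∀ C : Finset E, IsCover C e → IsCoverFam C h (h e))

/-! (ii) ⇒ (i): a tight character `ψ` is `1` at some `f`; being tight it is `1` on some member
`f ⊓ h e` of the cover of `f`, hence on `h e`.

(i) ⇒ (ii): call `x` uncovered if no finite family `x ⊓ h e` covers `x`. Uncovered elements are
prime for covers: if `y ≤ x` is uncovered and `C` covers `x`, some `y ⊓ c` is uncovered (otherwise
the finitely many witnesses together would cover `y`). By Zorn, an uncovered `f` lies in a maximal
filter of uncovered elements; primality and maximality make it tight, and it misses every `h e`
since `h e` is covered by `h e` itself. Its indicator is a tight character vanishing on `h(E)`. -/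

section Characters

variable {α : Type*} [SemilatticeInf α] [OrderBot α]

theorem IsCoverFam.isCover_image [DecidableEq α] {ι : Type*} {C : Finset ι} {v : ι → α} {f : α}
    (hC : IsCoverFam C v f) : IsCover (C.image v) f := by
  refine ⟨fun c hc => ?_, fun g hg hgf => ?_⟩
  · obtain ⟨i, hi, rfl⟩ := Finset.mem_image.mp hc
    exact hC.1 i hi
  · obtain ⟨i, hi, hgi⟩ := hC.2 g hg hgf
    exact ⟨v i, Finset.mem_image_of_mem v hi, hgi⟩

theorem IsChar.eq_true_of_le {φ : α → Bool} (hφ : IsChar φ) {a b : α} (hab : a ≤ b)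
    (ha : φ a = true) : φ b = true := by
  have hmul := hφ.2.1 a b
  rw [inf_eq_left.mpr hab, ha, Bool.true_and] at hmul
  exact hmul.symm

theorem IsTightChar.exists_of_isCoverFam {φ : α → Bool} (hφ : IsTightChar φ) {ι : Type*}
    {C : Finset ι} {v : ι → α} {f : α} (hC : IsCoverFam C v f) (hf : φ f = true) :
    ∃ i ∈ C, φ (v i) = true := by
  classical
  obtain ⟨c, hc, hφc⟩ := (hφ.2 f _ hC.isCover_image).mp hf
  obtain ⟨i, hi, rfl⟩ := Finset.mem_image.mp hc
  exact ⟨i, hi, hφc⟩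

theorem IsTightFilter.isTightChar {ξ : Set α} [DecidablePred (· ∈ ξ)] (hξ : IsTightFilter ξ) :
    IsTightChar (fun x => decide (x ∈ ξ)) := by
  obtain ⟨⟨⟨f, hf⟩, hbot, hinf, hup⟩, htight⟩ := hξ
  refine ⟨⟨by simpa using hbot, fun a b => ?_, ⟨f, by simpa using hf⟩⟩, fun x C hC => ?_⟩
  · have hmem : a ⊓ b ∈ ξ ↔ a ∈ ξ ∧ b ∈ ξ :=
      ⟨fun hab => ⟨hup _ hab _ inf_le_left, hup _ hab _ inf_le_right⟩,
        fun ⟨ha, hb⟩ => hinf a ha b hb⟩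
    simp only [hmem, Bool.decide_and]
  · simp only [decide_eq_true_eq]
    exact ⟨fun hx => htight x hx C hC, fun ⟨c, hc, hcξ⟩ => hup c hcξ x (hC.1 c hc)⟩

end Characters

section Uncovered

variable {E F : Type*} [SemilatticeInf F] [OrderBot F]

def IsUncoveredBy (h : E → F) (x : F) : Prop :=
  ∀ C : Finset E, ∃ g : F, g ≠ ⊥ ∧ g ≤ x ∧ ∀ e ∈ C, g ⊓ h e = ⊥

variable {h : E → F}

theorem isUncoveredBy_iff_forall_not_isCoverFam {x : F} :
    IsUncoveredBy h x ↔ ∀ C : Finset E, ¬ IsCoverFam C (fun e => x ⊓ h e) x := by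
  refine forall_congr' fun C => ?_
  have hmeet : ∀ g ≤ x, ∀ e, g ⊓ (x ⊓ h e) = g ⊓ h e := fun g hg e => by
    rw [← inf_assoc, inf_eq_left.mpr hg]
  simp only [IsCoverFam, inf_le_left, implies_true, true_and, not_forall, not_exists, exists_prop]
  refine exists_congr fun g => and_congr_right fun _ => and_congr_right fun hg => ?_
  simp only [hmeet g hg, not_and, not_not]

theorem IsUncoveredBy.mono {x y : F} (hx : IsUncoveredBy h x) (hxy : x ≤ y) :
    IsUncoveredBy h y := fun C =>
  let ⟨g, hg, hgx, hgC⟩ := hx C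
  ⟨g, hg, hgx.trans hxy, hgC⟩

theorem IsUncoveredBy.ne_bot {x : F} (hx : IsUncoveredBy h x) : x ≠ ⊥ := by
  obtain ⟨g, hg, hgx, -⟩ := hx ∅
  exact fun hx => hg (le_bot_iff.mp (hx ▸ hgx))

theorem not_isUncoveredBy_apply (e : E) : ¬ IsUncoveredBy h (h e) := fun he => by
  obtain ⟨g, hg, hge, hgC⟩ := he {e}
  exact hg (inf_eq_left.mpr hge ▸ hgC e (Finset.mem_singleton_self e))

theorem IsUncoveredBy.exists_inf_of_isCover {x y : F} {C : Finset F}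
    (hy : IsUncoveredBy h y) (hyx : y ≤ x) (hC : IsCover C x) :
    ∃ c ∈ C, IsUncoveredBy h (y ⊓ c) := by
  classical
  by_contra! hcov
  simp only [IsUncoveredBy, not_forall, not_exists, not_and] at hcov
  choose! D hD using hcov
  obtain ⟨g, hg, hgy, hgD⟩ := hy (C.biUnion D)
  obtain ⟨c, hc, hgc⟩ := hC.2 g hg (hgy.trans hyx)
  obtain ⟨e, he, hgce⟩ := hD c hc (g ⊓ c) hgc (inf_le_inf_right c hgy)
  refine hgce (le_bot_iff.mp ?_)
  calc g ⊓ c ⊓ h e ≤ g ⊓ h e := inf_le_inf_right _ inf_le_left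
    _ = ⊥ := hgD e (Finset.mem_biUnion.mpr ⟨c, hc, he⟩)

structure IsUncoveredFilter (h : E → F) (ξ : Set F) : Prop where
  isUpperSet : IsUpperSet ξ
  infClosed : InfClosed ξ
  isUncoveredBy : ∀ x ∈ ξ, IsUncoveredBy h x

theorem isUncoveredFilter_Ici {f : F} (hf : IsUncoveredBy h f) :
    IsUncoveredFilter h (Set.Ici f) :=
  ⟨isUpperSet_Ici f, fun _ ha _ hb => le_inf ha hb, fun _ hx => hf.mono hx⟩

theorem isUncoveredFilter_sUnion {c : Set (Set F)} (hc : IsChain (· ⊆ ·) c)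
    (hcξ : ∀ ξ ∈ c, IsUncoveredFilter h ξ) : IsUncoveredFilter h (⋃₀ c) where
  isUpperSet := isUpperSet_sUnion fun ξ hξ => (hcξ ξ hξ).isUpperSet
  infClosed := by
    rintro x ⟨ξ, hξ, hx⟩ y ⟨ζ, hζ, hy⟩
    obtain hle | hle := hc.total hξ hζ
    · exact ⟨ζ, hζ, (hcξ ζ hζ).infClosed (hle hx) hy⟩
    · exact ⟨ξ, hξ, (hcξ ξ hξ).infClosed hx (hle hy)⟩
  isUncoveredBy := by
    rintro x ⟨ξ, hξ, hx⟩
    exact (hcξ ξ hξ).isUncoveredBy x hx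

theorem IsUncoveredFilter.adjoin {ξ : Set F} (hξ : IsUncoveredFilter h ξ) {c : F}
    (hc : ∀ x ∈ ξ, IsUncoveredBy h (x ⊓ c)) : IsUncoveredFilter h {y | ∃ x ∈ ξ, x ⊓ c ≤ y} where
  isUpperSet := fun _ _ hyz ⟨x, hx, hxy⟩ => ⟨x, hx, hxy.trans hyz⟩
  infClosed := by
    rintro y ⟨x, hx, hxy⟩ z ⟨w, hw, hwz⟩
    exact ⟨x ⊓ w, hξ.infClosed hx hw, le_inf ((inf_le_inf_right c inf_le_left).trans hxy)
      ((inf_le_inf_right c inf_le_right).trans hwz)⟩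
  isUncoveredBy := fun _ ⟨x, hx, hxy⟩ => (hc x hx).mono hxy

theorem Maximal.mem_of_isUncoveredFilter {m : Set F} (hm : Maximal (IsUncoveredFilter h) m)
    (hne : m.Nonempty) {c : F} (hc : ∀ x ∈ m, IsUncoveredBy h (x ⊓ c)) : c ∈ m :=
  let ⟨x, hx⟩ := hne
  hm.2 (hm.1.adjoin hc) (fun y hy => ⟨y, hy, inf_le_left⟩) ⟨x, hx, inf_le_right⟩

theorem Maximal.isTightFilter_of_isUncoveredFilter {m : Set F}
    (hm : Maximal (IsUncoveredFilter h) m) (hne : m.Nonempty) : IsTightFilter m := by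
  classical
  refine ⟨⟨hne, fun hbot => (hm.1.isUncoveredBy ⊥ hbot).ne_bot rfl,
    fun _ ha _ hb => hm.1.infClosed ha hb, fun _ ha _ hab => hm.1.isUpperSet hab ha⟩, ?_⟩
  intro x hx C hC
  by_contra! hCm
  have hblocked : ∀ c ∈ C, ∃ y ∈ m, ¬ IsUncoveredBy h (y ⊓ c) := fun c hc => by
    by_contra! H
    exact hCm c hc (hm.mem_of_isUncoveredFilter hne H)
  choose! w hwm hw using hblocked
  set y := (insert x (C.image w)).inf' (Finset.insert_nonempty _ _) id
  have hym : y ∈ m := hm.1.infClosed.finsetInf'_mem _ fun z hz => by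
    obtain rfl | hz := Finset.mem_insert.mp hz
    · exact hx
    · obtain ⟨c, hc, rfl⟩ := Finset.mem_image.mp hz
      exact hwm c hc
  have hyx : y ≤ x := Finset.inf'_le id (Finset.mem_insert_self x _)
  have hyw : ∀ c ∈ C, y ≤ w c := fun c hc =>
    Finset.inf'_le id (Finset.mem_insert_of_mem (Finset.mem_image_of_mem w hc))
  obtain ⟨c, hc, hyc⟩ := (hm.1.isUncoveredBy y hym).exists_inf_of_isCover hyx hC
  exact hw c hc (hyc.mono (inf_le_inf_right c (hyw c hc)))

theorem IsUncoveredBy.exists_isTightFilter {f : F} (hf : IsUncoveredBy h f) :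
    ∃ ξ : Set F, f ∈ ξ ∧ IsTightFilter ξ ∧ ∀ e, h e ∉ ξ := by
  obtain ⟨m, hfm, hm⟩ := zorn_subset_nonempty {ξ | IsUncoveredFilter h ξ}
    (fun c hcS hc _ => ⟨_, isUncoveredFilter_sUnion hc hcS, fun _ => Set.subset_sUnion_of_mem⟩)
    _ (isUncoveredFilter_Ici hf)
  have hm : Maximal (IsUncoveredFilter h) m := hm
  have hfm : f ∈ m := hfm (le_refl f)
  exact ⟨m, hfm, hm.isTightFilter_of_isUncoveredFilter ⟨f, hfm⟩,
    fun e he => not_isUncoveredBy_apply e (hm.1.isUncoveredBy _ he)⟩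

end Uncovered

theorem tight_cond_one_iff_general {E F : Type*}
    [SemilatticeInf F] [OrderBot F]
    (h : E → F) :
    (∀ ψ : F → Bool, IsTightChar ψ → ∃ e : E, ψ (h e) = true) ↔
    (∀ f : F, ∃ C : Finset E, IsCoverFam C (fun e => f ⊓ h e) f) := by
  classical
  refine ⟨fun H f => ?_, fun H ψ hψ => ?_⟩
  · by_contra! hf
    obtain ⟨ξ, -, hξ, hhξ⟩ := (isUncoveredBy_iff_forall_not_isCoverFam.mpr hf).exists_isTightFilter
    obtain ⟨e, he⟩ := H _ hξ.isTightChar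
    exact hhξ e (decide_eq_true_iff.mp he)
  · obtain ⟨f, hf⟩ := hψ.1.2.2
    obtain ⟨C, hC⟩ := H f
    obtain ⟨e, -, he⟩ := hψ.exists_of_isCoverFam hC hf
    exact ⟨e, hψ.1.eq_true_of_le inf_le_right he⟩

/-- For a homomorphism `h : E → F` of semilattices with zero, the
following are equivalent: (i) for every tight character `ψ` on `F`, `ψ ∘ h` is nonzero;
(ii) for every `f ∈ F` there is a finite `C ⊆ E` such that `{f ⊓ h e : e ∈ C}` is a cover
for `f`. -/
theorem tight_cond_one_iff {E F : Type*} [SemilatticeInf E] [OrderBot E]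
    [SemilatticeInf F] [OrderBot F]
    (h : E → F) (h0 : h ⊥ = ⊥) (hinf : ∀ a b : E, h (a ⊓ b) = h a ⊓ h b) :
    (∀ ψ : F → Bool, IsTightChar ψ → ∃ e : E, ψ (h e) = true) ↔
    (∀ f : F, ∃ C : Finset E, IsCoverFam C (fun e => f ⊓ h e) f) :=
  tight_cond_one_iff_general h
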